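/- arXiv:2408.06042 — 2 statements merged into one kernel-verified Lean document; each statement's English description precedes it below -/
import Mathlib

section
/- Let E be a real inner product space, F : E → ℝ a differentiable function whose gradient ∇F is L-Lipschitz for some L > 0, and let η > 0 satisfy η ≤ 1/L. Let x ∈ E, let V_1, …, V_n ∈ E with mean V̄ = (1/n)·Σ_k V_k, and suppose V̄ = ∇F(x). If Q ∈ E satisfies the robustness deviation bound ‖Q − V̄‖² ≤ (α/n)·Σ_{k=1}^n ‖V_k − V̄‖² for some α ≥ 0, then F(x − η·Q) ≤ F(x) − (η/2)·‖∇F(x)‖² + (η·α/(2n))·Σ_{k=1}^n ‖V_k − V̄‖². -/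
/-!
For `F` with `L`-Lipschitz gradient the descent lemma
`F (x + v) ≤ F x + ⟪∇F x, v⟫ + (L / 2) ‖v‖²`, applied to the step `v = -η Q` with `L η ≤ 1`,
gives `F (x - η Q) ≤ F x - (η / 2) ‖∇F x‖² + (η / 2) ‖Q - ∇F x‖²` once `‖Q - ∇F x‖²` is expanded.
Since the honest mean is `∇F x`, the robustness bound controls the last term.
-/

open scoped RealInnerProductSpace

section LipschitzGradient

variable {E : Type*} [NormedAddCommGroup E] [InnerProductSpace ℝ E] [CompleteSpace E]

theorem HasGradientAt.hasDerivAt_comp_add_smul {F : E → ℝ} {g x v : E} {t : ℝ}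
    (hF : HasGradientAt F g (x + t • v)) :
    HasDerivAt (fun s : ℝ => F (x + s • v)) ⟪g, v⟫ t := by
  have hline : HasDerivAt (fun s : ℝ => x + s • v) v t := by
    simpa using ((hasDerivAt_id t).smul_const v).const_add x
  exact hF.hasFDerivAt.comp_hasDerivAt t hline

theorem le_add_inner_gradient_add_of_lipschitz_gradient {F : E → ℝ} {L : ℝ}
    (hF : Differentiable ℝ F)
    (hlip : ∀ x y : E, ‖gradient F x - gradient F y‖ ≤ L * ‖x - y‖) (x v : E) :
    F (x + v) ≤ F x + ⟪gradient F x, v⟫ + L / 2 * ‖v‖ ^ 2 := by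
  set φ : ℝ → ℝ := fun t => F (x + t • v) - t * ⟪gradient F x, v⟫ - L / 2 * t ^ 2 * ‖v‖ ^ 2
  set φ' : ℝ → ℝ := fun t =>
    ⟪gradient F (x + t • v), v⟫ - ⟪gradient F x, v⟫ - L * t * ‖v‖ ^ 2
  have hφ : ∀ t, HasDerivAt φ (φ' t) t := fun t => by
    have hline := (hF (x + t • v)).hasGradientAt.hasDerivAt_comp_add_smul
    refine ((hline.sub ((hasDerivAt_id t).mul_const ⟪gradient F x, v⟫)).sub
      (((hasDerivAt_pow 2 t).const_mul (L / 2)).mul_const (‖v‖ ^ 2))).congr_deriv ?_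
    simp only [φ']
    ring
  have hφ'_nonpos : ∀ t ∈ interior (Set.Icc (0 : ℝ) 1), φ' t ≤ 0 := fun t ht => by
    rw [interior_Icc] at ht
    have hgrad : ‖gradient F (x + t • v) - gradient F x‖ ≤ L * (t * ‖v‖) := by
      simpa [norm_smul, abs_of_pos ht.1] using hlip (x + t • v) x
    calc φ' t = ⟪gradient F (x + t • v) - gradient F x, v⟫ - L * t * ‖v‖ ^ 2 := by
          simp only [φ', inner_sub_left]
      _ ≤ ‖gradient F (x + t • v) - gradient F x‖ * ‖v‖ - L * t * ‖v‖ ^ 2 := by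
          gcongr; exact real_inner_le_norm _ _
      _ ≤ L * (t * ‖v‖) * ‖v‖ - L * t * ‖v‖ ^ 2 := by gcongr
      _ = 0 := by ring
  have hanti : AntitoneOn φ (Set.Icc 0 1) :=
    antitoneOn_of_hasDerivWithinAt_nonpos (convex_Icc 0 1)
      (fun t _ => (hφ t).continuousAt.continuousWithinAt)
      (fun t _ => (hφ t).hasDerivWithinAt) hφ'_nonpos
  have hφ_one_le_zero := hanti (by simp) (by simp) zero_le_one
  simp only [φ, one_smul, zero_smul, add_zero, one_mul, zero_mul, sub_zero, one_pow,
    ne_eq, OfNat.ofNat_ne_zero, not_false_eq_true, zero_pow, mul_zero] at hφ_one_le_zero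
  linarith

theorem le_sub_gradient_step_of_lipschitz_gradient {F : E → ℝ} {L η : ℝ}
    (hF : Differentiable ℝ F)
    (hlip : ∀ x y : E, ‖gradient F x - gradient F y‖ ≤ L * ‖x - y‖)
    (hη : 0 ≤ η) (hLη : L * η ≤ 1) (x Q : E) :
    F (x - η • Q) ≤
      F x - η / 2 * ‖gradient F x‖ ^ 2 + η / 2 * ‖Q - gradient F x‖ ^ 2 := by
  have hdescent := le_add_inner_gradient_add_of_lipschitz_gradient hF hlip x (-(η • Q))
  rw [← sub_eq_add_neg, inner_neg_right, real_inner_smul_right, norm_neg, norm_smul,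
    Real.norm_eq_abs, abs_of_nonneg hη] at hdescent
  have hstep : L / 2 * (η * ‖Q‖) ^ 2 ≤ η / 2 * ‖Q‖ ^ 2 := by
    have := mul_le_mul_of_nonneg_right hLη (by positivity : 0 ≤ η / 2 * ‖Q‖ ^ 2)
    linarith
  rw [norm_sub_sq_real, real_inner_comm]
  linarith

end LipschitzGradient

theorem robust_aggregation_descent_general
    {E : Type*} [NormedAddCommGroup E] [InnerProductSpace ℝ E] [CompleteSpace E]
    (F : E → ℝ) (L η : ℝ)
    (hdiff : Differentiable ℝ F)
    (hlip : ∀ x y : E, ‖gradient F x - gradient F y‖ ≤ L * ‖x - y‖)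
    (hη : 0 < η) (hηL : η ≤ 1 / L)
    (x : E) {n : ℕ} (V : Fin n → E)
    (Vbar : E)
    (hmean : Vbar = gradient F x)
    (Q : E) (α : ℝ)
    (hrobust : ‖Q - Vbar‖ ^ 2 ≤ (α / n) * ∑ k, ‖V k - Vbar‖ ^ 2) :
    F (x - η • Q) ≤
      F x - (η / 2) * ‖gradient F x‖ ^ 2 +
        (η * α / (2 * n)) * ∑ k, ‖V k - Vbar‖ ^ 2 := by
  have hLη : L * η ≤ 1 := by
    rcases le_or_gt L 0 with hL | hL
    · nlinarith
    · rwa [le_div_iff₀ hL, mul_comm] at hηL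
  subst hmean
  calc F (x - η • Q)
      ≤ F x - η / 2 * ‖gradient F x‖ ^ 2 + η / 2 * ‖Q - gradient F x‖ ^ 2 :=
        le_sub_gradient_step_of_lipschitz_gradient hdiff hlip hη.le hLη x Q
    _ ≤ F x - η / 2 * ‖gradient F x‖ ^ 2 + η / 2 * ((α / n) * ∑ k, ‖V k - gradient F x‖ ^ 2) := by
        gcongr
    _ = _ := by ring

/-- One aggregation step with a robust aggregation output decreases `F` up to
the robustness-induced error: combining the descent inequality from the proof
of Theorem 2 (Convergence Analysis) with the `(h, α)`-robustness deviation
bound, assuming the honest mean equals the true gradient at the iterate. -/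
theorem robust_aggregation_descent
    {E : Type*} [NormedAddCommGroup E] [InnerProductSpace ℝ E] [CompleteSpace E]
    (F : E → ℝ) (L η : ℝ) (hL : 0 < L)
    (hdiff : Differentiable ℝ F)
    (hlip : ∀ x y : E, ‖gradient F x - gradient F y‖ ≤ L * ‖x - y‖)
    (hη : 0 < η) (hηL : η ≤ 1 / L)
    (x : E) {n : ℕ} (V : Fin n → E)
    (Vbar : E) (hVbar : Vbar = (n : ℝ)⁻¹ • ∑ k, V k)
    (hmean : Vbar = gradient F x)
    (Q : E) (α : ℝ) (hα : 0 ≤ α)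
    (hrobust : ‖Q - Vbar‖ ^ 2 ≤ (α / n) * ∑ k, ‖V k - Vbar‖ ^ 2) :
    F (x - η • Q) ≤
      F x - (η / 2) * ‖gradient F x‖ ^ 2 +
        (η * α / (2 * n)) * ∑ k, ‖V k - Vbar‖ ^ 2 :=
  robust_aggregation_descent_general F L η hdiff hlip hη hηL x V Vbar hmean Q α hrobust
end

section
/- Let (Ω, 𝒫) be a probability space, E a real inner product space (finite-dimensional), X : Ω → E a square-integrable random vector with E[X] = 0 and E[‖X‖²] ≤ σ², let e, d ∈ E be fixed vectors, and let β ∈ (0, 1]. Then E[‖β·X + (1 − β)·(e + d)‖²] ≤ (1 − β/2)·‖e‖² + (2/β)·‖d‖² + β²·σ². -/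
/-!
Since `X` has mean zero, the cross term of `‖β • X + c‖²` integrates to zero, so the expectation
splits into `β² E‖X‖² + ‖c‖²` with `c = (1 - β) • (e + d)`. Young's inequality with weight `β / 2`
then bounds `(1 - β)² ‖e + d‖²` by `(1 - β / 2) ‖e‖² + (2 / β) ‖d‖²`.
-/

open MeasureTheory

theorem norm_add_sq_le_one_add_mul_add {F : Type*} [SeminormedAddCommGroup F] (a b : F)
    {γ : ℝ} (hγ : 0 < γ) : ‖a + b‖ ^ 2 ≤ (1 + γ) * ‖a‖ ^ 2 + (1 + γ⁻¹) * ‖b‖ ^ 2 := by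
  have hyoung := two_mul_le_add_mul_sq (a := ‖a‖) (b := ‖b‖) hγ
  calc ‖a + b‖ ^ 2 ≤ (‖a‖ + ‖b‖) ^ 2 := by gcongr; exact norm_add_le a b
    _ ≤ _ := by linarith

theorem norm_one_sub_smul_add_sq_le {F : Type*} [NormedAddCommGroup F] [NormedSpace ℝ F]
    (e d : F) {β : ℝ} (hβ0 : 0 < β) (hβ1 : β ≤ 1) :
    ‖(1 - β) • (e + d)‖ ^ 2 ≤ (1 - β / 2) * ‖e‖ ^ 2 + (2 / β) * ‖d‖ ^ 2 := by
  have hyoung := norm_add_sq_le_one_add_mul_add e d (half_pos hβ0)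
  rw [inv_div] at hyoung
  have hcoef_e : (1 - β) * (1 + β / 2) ≤ 1 - β / 2 := by nlinarith
  have hcoef_d : (1 - β) * (1 + 2 / β) ≤ 2 / β := by
    have : (1 - β) * (1 + 2 / β) = 2 / β - 1 - β := by field_simp; ring
    linarith
  have hsq_le : (1 - β) ^ 2 ≤ 1 - β := by nlinarith
  rw [norm_smul, mul_pow, Real.norm_eq_abs, sq_abs]
  calc (1 - β) ^ 2 * ‖e + d‖ ^ 2
      ≤ (1 - β) * ((1 + β / 2) * ‖e‖ ^ 2 + (1 + 2 / β) * ‖d‖ ^ 2) := by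
        gcongr
    _ = (1 - β) * (1 + β / 2) * ‖e‖ ^ 2 + (1 - β) * (1 + 2 / β) * ‖d‖ ^ 2 := by ring
    _ ≤ (1 - β / 2) * ‖e‖ ^ 2 + (2 / β) * ‖d‖ ^ 2 := by gcongr

theorem integral_norm_add_const_sq {Ω : Type*} [MeasurableSpace Ω] {P : Measure Ω}
    [IsProbabilityMeasure P] {E : Type*} [NormedAddCommGroup E] [InnerProductSpace ℝ E]
    [CompleteSpace E] {X : Ω → E} (hX : MemLp X 2 P) (hmean : ∫ ω, X ω ∂P = 0) (c : E) :
    ∫ ω, ‖X ω + c‖ ^ 2 ∂P = ∫ ω, ‖X ω‖ ^ 2 ∂P + ‖c‖ ^ 2 := by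
  have hXint : Integrable X P := hX.integrable one_le_two
  have hsq : Integrable (fun ω => ‖X ω‖ ^ 2) P := hX.norm.integrable_sq
  have hcross : Integrable (fun ω => 2 * inner ℝ (X ω) c) P :=
    (hXint.inner_const c).const_mul 2
  have hsum : Integrable (fun ω => ‖X ω‖ ^ 2 + 2 * inner ℝ (X ω) c) P := hsq.add hcross
  have hcross_zero : ∫ ω, inner ℝ (X ω) c ∂P = 0 := by
    simp_rw [real_inner_comm c]
    rw [integral_inner hXint, hmean, inner_zero_right]
  simp only [norm_add_sq_real]
  rw [integral_add hsum (integrable_const _), integral_add hsq hcross, integral_const_mul,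
    hcross_zero, integral_const]
  simp

theorem momentum_deviation_contraction_general
    {Ω : Type*} [MeasurableSpace Ω] (P : Measure Ω) [IsProbabilityMeasure P]
    {E : Type*} [NormedAddCommGroup E] [InnerProductSpace ℝ E]
    [FiniteDimensional ℝ E]
    (X : Ω → E) (hL2 : MemLp X 2 P)
    (hmean : ∫ ω, X ω ∂P = 0)
    (σ : ℝ) (hvar : ∫ ω, ‖X ω‖ ^ 2 ∂P ≤ σ ^ 2)
    (e d : E) (β : ℝ) (hβ0 : 0 < β) (hβ1 : β ≤ 1) :
    ∫ ω, ‖β • X ω + (1 - β) • (e + d)‖ ^ 2 ∂P ≤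
      (1 - β / 2) * ‖e‖ ^ 2 + (2 / β) * ‖d‖ ^ 2 + β ^ 2 * σ ^ 2 := by
  have hmean_smul : ∫ ω, β • X ω ∂P = 0 := by rw [integral_smul, hmean, smul_zero]
  have hnoise : ∫ ω, ‖β • X ω‖ ^ 2 ∂P = β ^ 2 * ∫ ω, ‖X ω‖ ^ 2 ∂P := by
    simp only [norm_smul, mul_pow, Real.norm_eq_abs, sq_abs, integral_const_mul]
  rw [integral_norm_add_const_sq (X := fun ω => β • X ω) (hL2.const_smul β) hmean_smul, hnoise]
  have hdrift := norm_one_sub_smul_add_sq_le e d hβ0 hβ1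
  have hvar' : β ^ 2 * ∫ ω, ‖X ω‖ ^ 2 ∂P ≤ β ^ 2 * σ ^ 2 := by gcongr
  linarith

/-- One-step contraction of the momentum deviation (proof of Theorem 2,
Convergence Analysis): if `X` is a zero-mean noise with second moment at most
`σ²`, `e` the previous deviation and `d` the gradient drift, then
`E‖β•X + (1-β)•(e+d)‖² ≤ (1 - β/2)‖e‖² + (2/β)‖d‖² + β²σ²`. -/
theorem momentum_deviation_contraction
    {Ω : Type*} [MeasurableSpace Ω] (P : Measure Ω) [IsProbabilityMeasure P]
    {E : Type*} [NormedAddCommGroup E] [InnerProductSpace ℝ E]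
    [FiniteDimensional ℝ E] [MeasurableSpace E] [BorelSpace E]
    (X : Ω → E) (hmeas : Measurable X) (hL2 : MemLp X 2 P)
    (hmean : ∫ ω, X ω ∂P = 0)
    (σ : ℝ) (hvar : ∫ ω, ‖X ω‖ ^ 2 ∂P ≤ σ ^ 2)
    (e d : E) (β : ℝ) (hβ0 : 0 < β) (hβ1 : β ≤ 1) :
    ∫ ω, ‖β • X ω + (1 - β) • (e + d)‖ ^ 2 ∂P ≤
      (1 - β / 2) * ‖e‖ ^ 2 + (2 / β) * ‖d‖ ^ 2 + β ^ 2 * σ ^ 2 :=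
  momentum_deviation_contraction_general P X hL2 hmean σ hvar e d β hβ0 hβ1
end
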